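/- The family {Z_σ : σ ∈ Γ} is an orthonormal basis of L²(Ω, ℙ): the Z_σ are pairwise orthogonal unit vectors, and their linear span is dense in L²(Ω, ℙ) (the chaotic representation property). -/

import Mathlib

open MeasureTheory ProbabilityTheory
open scoped RealInnerProductSpace ENNReal

noncomputable section

/-- `Ω = {-1,1}^ℕ`, with the two-point set `{-1,1}` coded by `Bool`
(`true` codes `1`, `false` codes `-1`). -/
abbrev Omega : Type := ℕ → Bool

/-- The canonical projection `ζₙ(ω) = ω(n) ∈ {-1,1}`. -/
def zeta (n : ℕ) (ω : Omega) : ℝ := if ω n then 1 else -1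

/-- `Zₙ = (ζₙ + qₙ - pₙ)/(2√(pₙ qₙ))`, as a pointwise function on `Ω`. -/
def Zf (p : ℕ → ℝ) (n : ℕ) (ω : Omega) : ℝ :=
  (zeta n ω + (1 - p n) - p n) / (2 * Real.sqrt (p n * (1 - p n)))

/-- `Z_σ = ∏_{j∈σ} Z_j`, as a pointwise function on `Ω` (`Z_∅ = 1`). -/
def ZSf (p : ℕ → ℝ) (σ : Finset ℕ) (ω : Omega) : ℝ := ∏ j ∈ σ, Zf p j ω

lemma measurable_ZSf (p : ℕ → ℝ) (σ : Finset ℕ) : Measurable (ZSf p σ) := by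
  apply Finset.measurable_prod
  intro j _
  unfold Zf zeta
  apply Measurable.div _ measurable_const
  apply Measurable.sub _ measurable_const
  apply Measurable.add _ measurable_const
  exact (Measurable.of_discrete (f := fun b : Bool => if b = true then (1:ℝ) else -1)).comp
    (measurable_pi_apply j)

/-- A pointwise bound for `Z_j`. -/
def Mb (p : ℕ → ℝ) (j : ℕ) : ℝ :=
  max |(1 + (1 - p j) - p j) / (2 * Real.sqrt (p j * (1 - p j)))|
      |(-1 + (1 - p j) - p j) / (2 * Real.sqrt (p j * (1 - p j)))|

lemma abs_Zf_le (p : ℕ → ℝ) (j : ℕ) (ω : Omega) : |Zf p j ω| ≤ Mb p j := by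
  unfold Zf zeta Mb
  cases h : ω j
  · simpa using le_max_right _ _
  · simpa using le_max_left _ _

lemma memLp_ZSf (p : ℕ → ℝ) (P : Measure Omega) [IsProbabilityMeasure P] (σ : Finset ℕ) :
    MemLp (ZSf p σ) 2 P := by
  refine MemLp.of_bound (measurable_ZSf p σ).aestronglyMeasurable (∏ j ∈ σ, Mb p j) ?_
  filter_upwards with ω
  rw [Real.norm_eq_abs]
  calc |∏ j ∈ σ, Zf p j ω| = ∏ j ∈ σ, |Zf p j ω| := Finset.abs_prod σ _
  _ ≤ ∏ j ∈ σ, Mb p j :=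
      Finset.prod_le_prod (fun j _ => abs_nonneg _) (fun j _ => abs_Zf_le p j ω)

/-- `Z_σ` as an element of the real Hilbert space `L²(Ω, ℙ)`. -/
def ZLp (p : ℕ → ℝ) (P : Measure Omega) [IsProbabilityMeasure P] (σ : Finset ℕ) :
    Lp ℝ 2 P :=
  (memLp_ZSf p P σ).toLp _

/-- The `w`-counting measure `#_w(σ) = ∑_{j∈σ} w(j)`. -/
def cw (w : ℕ → ℝ) (σ : Finset ℕ) : ℝ := ∑ j ∈ σ, w j

/-- The domain `D_w = {ξ ∈ L²(Ω,ℙ) : ∑_{σ∈Γ} #_w(σ) |⟨Z_σ, ξ⟩|² < ∞}`. -/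
def Dw (p : ℕ → ℝ) (P : Measure Omega) [IsProbabilityMeasure P] (w : ℕ → ℝ) :
    Set (Lp ℝ 2 P) :=
  {ξ | Summable fun σ : Finset ℕ => cw w σ * ⟪ZLp p P σ, ξ⟫ ^ 2}

/-- The `w`-energy form `E_w(ξ, η) = ∑_{k=0}^∞ w(k) ⟨∂ₖξ, ∂ₖη⟩`, where `D k` plays the
role of the annihilation operator `∂ₖ`. -/
def Ew {P : Measure Omega} (w : ℕ → ℝ)
    (D : ℕ → (Lp ℝ 2 P →L[ℝ] Lp ℝ 2 P)) (ξ η : Lp ℝ 2 P) : ℝ :=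
  ∑' k, w k * ⟪D k ξ, D k η⟫

/-!
Both halves reduce to the fact that `Zₙ` is a normalized affine function of the single
coordinate `ζₙ`. Since `E[Zₙ] = 0` and `E[Zₙ²] = 1`, independence of the coordinates factors
`E[Z_σ Z_τ]` over `σ ∪ τ` into factors `E[Zⱼ] = 0` for `j ∈ σ ∆ τ` and `E[Zⱼ²] = 1` otherwise.
Conversely, every function of `ω j` is affine in `Zⱼ`, so every product `∏_{j∈s} gⱼ(ω j)`
expands into a combination of the `Z_t`, `t ⊆ s`. Indicators of square cylinders are such
products, so a `ξ` orthogonal to every `Z_σ` integrates to zero over a generating π-system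
containing `Ω`, hence vanishes.
-/

lemma Bool.exists_affine_of_ne {h : Bool → ℝ} (hne : h true ≠ h false) (g : Bool → ℝ) :
    ∃ a b : ℝ, ∀ x, g x = a + b * h x := by
  have hsub : h true - h false ≠ 0 := sub_ne_zero.mpr hne
  refine ⟨g false - (g true - g false) / (h true - h false) * h false,
    (g true - g false) / (h true - h false), fun x => ?_⟩
  cases x <;> field_simp <;> ring

lemma integral_comp_bool {Ω : Type*} [MeasurableSpace Ω] {P : Measure Ω} [IsProbabilityMeasure P]
    {X : Ω → Bool} (hX : Measurable X) (g : Bool → ℝ) :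
    ∫ ω, g (X ω) ∂P =
      P.real (X ⁻¹' {true}) * g true + (1 - P.real (X ⁻¹' {true})) * g false := by
  have hcompl : X ⁻¹' {false} = (X ⁻¹' {true})ᶜ := by ext; simp
  rw [← integral_map hX.aemeasurable Measurable.of_discrete.aestronglyMeasurable,
    integral_fintype .of_finite, Fintype.sum_bool,
    map_measureReal_apply hX (measurableSet_singleton _),
    map_measureReal_apply hX (measurableSet_singleton _), hcompl,
    probReal_compl_eq_one_sub (hX (measurableSet_singleton _))]
  rfl

lemma ProbabilityTheory.iIndepFun.integral_finset_prod_comp {Ω ι β : Type*} [MeasurableSpace Ω]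
    [MeasurableSpace β] {μ : Measure Ω} {X : ι → Ω → β} (hX : iIndepFun X μ)
    (mX : ∀ i, Measurable (X i)) {f : ι → β → ℝ} (hf : ∀ i, Measurable (f i)) (s : Finset ι) :
    ∫ ω, ∏ i ∈ s, f i (X i ω) ∂μ = ∏ i ∈ s, ∫ ω, f i (X i ω) ∂μ := by
  have h := iIndepFun.integral_fun_prod_comp (X := fun i : s => X i) (f := fun i => f i)
    (hX.precomp Subtype.val_injective) (fun i => (mX i).aemeasurable)
    (fun i => (hf i).aestronglyMeasurable)
  rw [Finset.prod_coe_sort s (fun i => ∫ ω, f i (X i ω) ∂μ)] at h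
  rw [← h]
  exact integral_congr_ae (ae_of_all _ fun ω => (Finset.prod_coe_sort s _).symm)

theorem MeasureTheory.Integrable.ae_eq_zero_of_forall_setIntegral_isPiSystem {α E : Type*}
    [NormedAddCommGroup E] [NormedSpace ℝ E] [CompleteSpace E]
    {m0 : MeasurableSpace α} {μ : Measure α} {f : α → E} {S : Set (Set α)}
    (h_eq : m0 = MeasurableSpace.generateFrom S) (h_inter : IsPiSystem S) (h_univ : Set.univ ∈ S)
    (hf : Integrable f μ) (h : ∀ t ∈ S, ∫ x in t, f x ∂μ = 0) : f =ᵐ[μ] 0 := by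
  have hall : ∀ t, MeasurableSet t → ∫ x in t, f x ∂μ = 0 := fun t ht => by
    induction t, ht using MeasurableSpace.induction_on_inter h_eq h_inter with
    | empty => simp
    | basic t ht => exact h t ht
    | compl t ht iht =>
      rw [setIntegral_compl ht hf, iht, ← setIntegral_univ, h _ h_univ, sub_zero]
    | iUnion g hd hm ih => simp [integral_iUnion hm hd hf.integrableOn, ih]
  exact hf.ae_eq_zero_of_forall_setIntegral_eq_zero fun t ht _ => hall t ht

def Zbool (p : ℕ → ℝ) (n : ℕ) (b : Bool) : ℝ :=
  ((if b then 1 else -1) + (1 - p n) - p n) / (2 * Real.sqrt (p n * (1 - p n)))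

lemma Zf_eq_Zbool (p : ℕ → ℝ) (n : ℕ) (ω : Omega) : Zf p n ω = Zbool p n (ω n) := rfl

section

variable {p : ℕ → ℝ} {P : Measure Omega} [IsProbabilityMeasure P]

lemma Zbool_true_ne_false {n : ℕ} (hp : 0 < p n ∧ p n < 1) :
    Zbool p n true ≠ Zbool p n false := by
  have hs : 0 < Real.sqrt (p n * (1 - p n)) := Real.sqrt_pos.mpr (by nlinarith)
  intro h
  simp only [Zbool, if_true, Bool.false_eq_true, if_false] at h
  field_simp at h
  linarith

lemma integral_comp_coord {n : ℕ} (hp : 0 ≤ p n)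
    (hdist : P {ω : Omega | ω n = true} = ENNReal.ofReal (p n)) (g : Bool → ℝ) :
    ∫ ω, g (ω n) ∂P = p n * g true + (1 - p n) * g false := by
  have hreal : P.real {ω : Omega | ω n = true} = p n := by
    rw [measureReal_def, hdist, ENNReal.toReal_ofReal hp]
  exact (integral_comp_bool (measurable_pi_apply n) g).trans (by rw [← hreal]; rfl)

lemma integral_Zf {n : ℕ} (hp : 0 < p n ∧ p n < 1)
    (hdist : P {ω : Omega | ω n = true} = ENNReal.ofReal (p n)) :
    ∫ ω, Zf p n ω ∂P = 0 := by
  have hs : 0 < Real.sqrt (p n * (1 - p n)) := Real.sqrt_pos.mpr (by nlinarith)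
  simp_rw [Zf_eq_Zbool]
  rw [integral_comp_coord (g := Zbool p n) hp.1.le hdist]
  simp only [Zbool, if_true, Bool.false_eq_true, if_false]
  field_simp
  ring

lemma integral_Zf_mul_self {n : ℕ} (hp : 0 < p n ∧ p n < 1)
    (hdist : P {ω : Omega | ω n = true} = ENNReal.ofReal (p n)) :
    ∫ ω, Zf p n ω * Zf p n ω ∂P = 1 := by
  have hpq : 0 < p n * (1 - p n) := by nlinarith
  simp_rw [Zf_eq_Zbool]
  rw [integral_comp_coord (g := fun b => Zbool p n b * Zbool p n b) hp.1.le hdist]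
  simp only [Zbool, if_true, Bool.false_eq_true, if_false]
  field_simp
  rw [Real.sq_sqrt hpq.le]
  ring

lemma ZSf_mul_ZSf (σ τ : Finset ℕ) (ω : Omega) :
    ZSf p σ ω * ZSf p τ ω =
      ∏ j ∈ σ ∪ τ, (if j ∈ σ then Zf p j ω else 1) * (if j ∈ τ then Zf p j ω else 1) := by
  rw [Finset.prod_mul_distrib, Finset.prod_ite_mem, Finset.prod_ite_mem,
    Finset.union_inter_cancel_left, Finset.union_inter_cancel_right, ZSf, ZSf]

lemma integral_ZSf_mul_ZSf (hp : ∀ n, 0 < p n ∧ p n < 1)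
    (hdist : ∀ n, P {ω : Omega | ω n = true} = ENNReal.ofReal (p n))
    (hindep : iIndepFun (fun n (ω : Omega) => ω n) P) (σ τ : Finset ℕ) :
    ∫ ω, ZSf p σ ω * ZSf p τ ω ∂P = if σ = τ then 1 else 0 := by
  have hfactor : ∀ j, ∫ ω, (if j ∈ σ then Zf p j ω else 1) * (if j ∈ τ then Zf p j ω else 1) ∂P
      = if (j ∈ σ ↔ j ∈ τ) then 1 else 0 := by
    intro j
    by_cases hσ : j ∈ σ <;> by_cases hτ : j ∈ τ <;>
      simp [hσ, hτ, integral_Zf (hp j) (hdist j), integral_Zf_mul_self (hp j) (hdist j)]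
  simp_rw [ZSf_mul_ZSf, Zf_eq_Zbool]
  rw [hindep.integral_finset_prod_comp (f := fun j b =>
      (if j ∈ σ then Zbool p j b else 1) * (if j ∈ τ then Zbool p j b else 1))
    measurable_pi_apply (fun _ => .of_discrete)]
  simp_rw [← Zf_eq_Zbool, hfactor, Finset.prod_boole]
  congr 1
  simp only [Finset.mem_union, eq_iff_iff]
  exact ⟨fun h => Finset.ext fun j => ⟨fun hj => (h j (.inl hj)).mp hj,
    fun hj => (h j (.inr hj)).mpr hj⟩, by rintro rfl; simp⟩

lemma prod_affine_Zf_eq_sum (a b : ℕ → ℝ) (s : Finset ℕ) (ω : Omega) :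
    ∏ j ∈ s, (a j + b j * Zf p j ω) =
      ∑ t ∈ s.powerset, ((∏ j ∈ t, a j) * ∏ j ∈ s \ t, b j) * ZSf p (s \ t) ω := by
  rw [Finset.prod_add]
  refine Finset.sum_congr rfl fun t _ => ?_
  rw [Finset.prod_mul_distrib, ZSf, mul_assoc]

lemma integral_prod_comp_coord_mul_eq_zero (hp : ∀ n, 0 < p n ∧ p n < 1) {f : Omega → ℝ}
    (hf : MemLp f 2 P) (horth : ∀ σ, ∫ ω, ZSf p σ ω * f ω ∂P = 0)
    (s : Finset ℕ) (g : ℕ → Bool → ℝ) :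
    ∫ ω, (∏ j ∈ s, g j (ω j)) * f ω ∂P = 0 := by
  have hint : ∀ σ, Integrable (fun ω => ZSf p σ ω * f ω) P := fun σ =>
    (memLp_ZSf p P σ).integrable_mul hf
  choose a b hab using fun j => Bool.exists_affine_of_ne (Zbool_true_ne_false (hp j)) (g j)
  simp_rw [hab, ← Zf_eq_Zbool, prod_affine_Zf_eq_sum, Finset.sum_mul,
    mul_assoc _ (ZSf p _ _) (f _)]
  rw [integral_finsetSum _ fun t _ => (hint _).const_mul _]
  exact Finset.sum_eq_zero fun t _ => by rw [integral_const_mul, horth, mul_zero]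

lemma ae_eq_zero_of_forall_integral_ZSf_mul_eq_zero (hp : ∀ n, 0 < p n ∧ p n < 1)
    {f : Omega → ℝ} (hf : MemLp f 2 P) (horth : ∀ σ, ∫ ω, ZSf p σ ω * f ω ∂P = 0) :
    f =ᵐ[P] 0 := by
  refine (hf.integrable one_le_two).ae_eq_zero_of_forall_setIntegral_isPiSystem
    generateFrom_squareCylinders.symm
    (isPiSystem_squareCylinders (fun _ => MeasurableSpace.isPiSystem_measurableSet)
      (fun _ => by simp))
    ⟨∅, fun _ => Set.univ, by simp, by simp⟩ ?_
  rintro _ ⟨s, t, ht, rfl⟩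
  have hmeas : MeasurableSet ((s : Set ℕ).pi t) :=
    .pi s.countable_toSet fun j _ => ht j (Set.mem_univ j)
  have hindicator : ∀ ω, ((s : Set ℕ).pi t).indicator f ω
      = (∏ j ∈ s, (t j).indicator 1 (ω j)) * f ω := fun ω => by
    rw [← Set.indicator_pi_one_apply, ← Set.indicator_mul_left, Pi.one_def]
    simp only [one_mul]
  rw [← integral_indicator hmeas]
  simp_rw [hindicator]
  exact integral_prod_comp_coord_mul_eq_zero hp hf horth s fun j => (t j).indicator 1

lemma inner_ZLp (σ : Finset ℕ) (ξ : Lp ℝ 2 P) : ⟪ZLp p P σ, ξ⟫ = ∫ ω, ZSf p σ ω * ξ ω ∂P := by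
  rw [L2.inner_def]
  refine integral_congr_ae ?_
  filter_upwards [MemLp.coeFn_toLp (memLp_ZSf p P σ)] with ω hω
  rw [RCLike.inner_apply, conj_trivial, ZLp, hω, mul_comm]

lemma orthonormal_ZLp (hp : ∀ n, 0 < p n ∧ p n < 1)
    (hdist : ∀ n, P {ω : Omega | ω n = true} = ENNReal.ofReal (p n))
    (hindep : iIndepFun (fun n (ω : Omega) => ω n) P) :
    Orthonormal ℝ (ZLp p P) := by
  rw [orthonormal_iff_ite]
  intro σ τ
  rw [inner_ZLp, ← integral_ZSf_mul_ZSf hp hdist hindep σ τ]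
  refine integral_congr_ae ?_
  filter_upwards [MemLp.coeFn_toLp (memLp_ZSf p P τ)] with ω hω
  rw [ZLp, hω]

lemma eq_zero_of_forall_inner_ZLp_eq_zero (hp : ∀ n, 0 < p n ∧ p n < 1) {ξ : Lp ℝ 2 P}
    (h : ∀ σ, ⟪ZLp p P σ, ξ⟫ = 0) : ξ = 0 := by
  rw [Lp.eq_zero_iff_ae_eq_zero]
  refine ae_eq_zero_of_forall_integral_ZSf_mul_eq_zero hp (Lp.memLp ξ) fun σ => ?_
  rw [← inner_ZLp, h]

end

theorem Z_family_orthonormal_basis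
    (p : ℕ → ℝ) (P : Measure Omega) [IsProbabilityMeasure P]
    (hp : ∀ n, 0 < p n ∧ p n < 1)
    (hdist : ∀ n, P {ω : Omega | ω n = true} = ENNReal.ofReal (p n))
    (hindep : iIndepFun (fun n (ω : Omega) => ω n) P) :
    Orthonormal ℝ (fun σ : Finset ℕ => ZLp p P σ) ∧
    Dense (Submodule.span ℝ (Set.range fun σ : Finset ℕ => ZLp p P σ) :
      Set (Lp ℝ 2 P)) := by
  refine ⟨orthonormal_ZLp hp hdist hindep, ?_⟩
  rw [Submodule.dense_iff_topologicalClosure_eq_top, Submodule.topologicalClosure_eq_top_iff,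
    Submodule.eq_bot_iff]
  intro ξ hξ
  exact eq_zero_of_forall_inner_ZLp_eq_zero hp fun σ =>
    (Submodule.mem_orthogonal _ ξ).mp hξ _ (Submodule.subset_span ⟨σ, rfl⟩)

end
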